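/- Let X and Y be real Banach spaces. The norm of the direct sum X ⊕₁ Y (product space with norm ‖(x,y)‖ = ‖x‖ + ‖y‖) is non rough if and only if both the norm of X and the norm of Y are non rough. -/

import Mathlib

open Metric NormedSpace ENNReal

section Defs

variable (Z : Type*) [NormedAddCommGroup Z] [NormedSpace ℝ Z]

/-- The w*-slice of the closed unit ball of the dual of `Z` determined by `z : Z` and `α > 0`:
`S(B_{Z*}, z, α) = {f ∈ B_{Z*} : f(z) > sup_{g ∈ B_{Z*}} g(z) − α}`. -/
def wStarSlice (z : Z) (α : ℝ) : Set (StrongDual ℝ Z) :=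
  {f | f ∈ closedBall (0 : StrongDual ℝ Z) 1 ∧
    f z > sSup ((fun g : StrongDual ℝ Z => g z) '' closedBall (0 : StrongDual ℝ Z) 1) - α}

/-- The norm of `Z` is `ε`-rough: every w*-slice of `B_{Z*}` has diameter at least `ε`. -/
def EpsRough (ε : ℝ) : Prop :=
  ∀ (z : Z) (α : ℝ), 0 < α → ε ≤ diam (wStarSlice Z z α)

/-- The norm of `Z` is non rough: it is not `ε`-rough for any `ε > 0`. -/
def NonRough : Prop := ∀ ε > 0, ¬ EpsRough Z ε

/-- `Z*` has the w*-Ball Dentable Property. -/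
def WStarBDP : Prop :=
  ∀ ε > 0, ∃ (z : Z) (α : ℝ), 0 < α ∧ diam (wStarSlice Z z α) < ε

/-- `V` is a (relatively) w*-open subset of the closed unit ball `B_{Z*}`. -/
def IsRelWStarOpen (V : Set (StrongDual ℝ Z)) : Prop :=
  ∃ U : Set (WeakDual ℝ Z), IsOpen U ∧
    V = {f | f ∈ closedBall (0 : StrongDual ℝ Z) 1 ∧ StrongDual.toWeakDual f ∈ U}

/-- The norm of `Z` is weakly `ε`-average rough: every nonempty relatively w*-open
subset of `B_{Z*}` has diameter at least `ε`. -/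
def WeaklyEpsAvgRough (ε : ℝ) : Prop :=
  ∀ V : Set (StrongDual ℝ Z), IsRelWStarOpen Z V → V.Nonempty → ε ≤ diam V

/-- The norm of `Z` is weakly average non rough. -/
def WeaklyAvgNonRough : Prop := ∀ ε > 0, ¬ WeaklyEpsAvgRough Z ε

/-- `Z*` has the w*-Ball Huskable Property. -/
def WStarBHP : Prop :=
  ∀ ε > 0, ∃ V : Set (StrongDual ℝ Z), IsRelWStarOpen Z V ∧ V.Nonempty ∧ diam V < ε

/-- `D` is a convex combination of w*-slices of `B_{Z*}`, i.e. `D = ∑ λᵢ Sᵢ` (Minkowski sum)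
with each `Sᵢ` a w*-slice, `λᵢ > 0`, `∑ λᵢ = 1`. -/
def IsConvexCombWStarSlices (D : Set (StrongDual ℝ Z)) : Prop :=
  ∃ (n : ℕ) (l : Fin n → ℝ) (z : Fin n → Z) (α : Fin n → ℝ),
    (∀ i, 0 < l i) ∧ (∑ i, l i) = 1 ∧ (∀ i, 0 < α i) ∧
    D = {f | ∃ g : Fin n → StrongDual ℝ Z,
      (∀ i, g i ∈ wStarSlice Z (z i) (α i)) ∧ f = ∑ i, l i • g i}

/-- The norm of `Z` is `ε`-average rough: every convex combination of w*-slices of `B_{Z*}`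
has diameter at least `ε`. -/
def EpsAvgRough (ε : ℝ) : Prop :=
  ∀ D : Set (StrongDual ℝ Z), IsConvexCombWStarSlices Z D → ε ≤ diam D

/-- The norm of `Z` is average non rough. -/
def AvgNonRough : Prop := ∀ ε > 0, ¬ EpsAvgRough Z ε

/-- `Z*` has the w*-Ball Small Combination of Slice Property. -/
def WStarBSCSP : Prop :=
  ∀ ε > 0, ∃ D : Set (StrongDual ℝ Z), IsConvexCombWStarSlices Z D ∧ diam D < ε

/-- A slice of the closed unit ball `B_Z` determined by `f ∈ Z*` and `α > 0`. -/
def ballSlice (f : StrongDual ℝ Z) (α : ℝ) : Set Z :=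
  {x | x ∈ closedBall (0 : Z) 1 ∧ f x > sSup (f '' closedBall (0 : Z) 1) - α}

/-- `Z` has the Ball Dentable Property. -/
def BDP : Prop :=
  ∀ ε > 0, ∃ (f : StrongDual ℝ Z) (α : ℝ), 0 < α ∧ diam (ballSlice Z f α) < ε

/-- `V` is a nonempty relatively weakly open subset of the closed unit ball `B_Z`. -/
def IsRelWeakOpen (V : Set Z) : Prop :=
  ∃ U : Set (WeakSpace ℝ Z), IsOpen U ∧
    V = {x | x ∈ closedBall (0 : Z) 1 ∧ toWeakSpace ℝ Z x ∈ U}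

/-- `Z` has the Ball Huskable Property. -/
def BHP : Prop :=
  ∀ ε > 0, ∃ V : Set Z, IsRelWeakOpen Z V ∧ V.Nonempty ∧ diam V < ε

/-- `D` is a convex combination of slices of `B_Z`. -/
def IsConvexCombSlices (D : Set Z) : Prop :=
  ∃ (n : ℕ) (l : Fin n → ℝ) (f : Fin n → StrongDual ℝ Z) (α : Fin n → ℝ),
    (∀ i, 0 < l i) ∧ (∑ i, l i) = 1 ∧ (∀ i, 0 < α i) ∧
    D = {x | ∃ g : Fin n → Z,
      (∀ i, g i ∈ ballSlice Z (f i) (α i)) ∧ x = ∑ i, l i • g i}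

/-- `Z` has the Ball Small Combination of Slice Property. -/
def BSCSP : Prop :=
  ∀ ε > 0, ∃ D : Set Z, IsConvexCombSlices Z D ∧ diam D < ε

variable {Z}

/-- The closed unit ball of a subspace `F` of the dual, viewed as a subset of the dual. -/
def subBall (F : Submodule ℝ (StrongDual ℝ Z)) : Set (StrongDual ℝ Z) :=
  {f | f ∈ F ∧ ‖f‖ ≤ 1}

/-- The w*-slice of `B_F` determined by `z : Z` and `α`. -/
def subWStarSlice (F : Submodule ℝ (StrongDual ℝ Z)) (z : Z) (α : ℝ) : Set (StrongDual ℝ Z) :=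
  {f | f ∈ subBall F ∧ f z > sSup ((fun g : StrongDual ℝ Z => g z) '' subBall F) - α}

/-- The subspace `F` of `Z*` has the w*-Ball Dentable Property. -/
def SubWStarBDP (F : Submodule ℝ (StrongDual ℝ Z)) : Prop :=
  ∀ ε > 0, ∃ (z : Z) (α : ℝ), 0 < α ∧ diam (subWStarSlice F z α) < ε

/-- `V` is a relatively w*-open subset of `B_F`. -/
def IsRelWStarOpenSub (F : Submodule ℝ (StrongDual ℝ Z)) (V : Set (StrongDual ℝ Z)) : Prop :=
  ∃ U : Set (WeakDual ℝ Z), IsOpen U ∧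
    V = {f | f ∈ subBall F ∧ StrongDual.toWeakDual f ∈ U}

/-- The subspace `F` of `Z*` has the w*-Ball Huskable Property. -/
def SubWStarBHP (F : Submodule ℝ (StrongDual ℝ Z)) : Prop :=
  ∀ ε > 0, ∃ V : Set (StrongDual ℝ Z), IsRelWStarOpenSub F V ∧ V.Nonempty ∧ diam V < ε

/-- `D` is a convex combination of w*-slices of `B_F`. -/
def IsConvexCombSubWStarSlices (F : Submodule ℝ (StrongDual ℝ Z)) (D : Set (StrongDual ℝ Z)) : Prop :=
  ∃ (n : ℕ) (l : Fin n → ℝ) (z : Fin n → Z) (α : Fin n → ℝ),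
    (∀ i, 0 < l i) ∧ (∑ i, l i) = 1 ∧ (∀ i, 0 < α i) ∧
    D = {f | ∃ g : Fin n → StrongDual ℝ Z,
      (∀ i, g i ∈ subWStarSlice F (z i) (α i)) ∧ f = ∑ i, l i • g i}

/-- The subspace `F` of `Z*` has the w*-Ball Small Combination of Slice Property. -/
def SubWStarBSCSP (F : Submodule ℝ (StrongDual ℝ Z)) : Prop :=
  ∀ ε > 0, ∃ D : Set (StrongDual ℝ Z), IsConvexCombSubWStarSlices F D ∧ diam D < ε

/-- The annihilator `Y^⊥ = {f ∈ Z* : f(y) = 0 for all y ∈ Y}` of a subspace `Y` of `Z`. -/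
noncomputable def annih (Y : Submodule ℝ Z) : Submodule ℝ (StrongDual ℝ Z) where
  carrier := {f | ∀ y ∈ Y, f y = 0}
  add_mem' := by intro f g hf hg y hy; simp [hf y hy, hg y hy]
  zero_mem' := by intro y hy; simp
  smul_mem' := by intro c f hf y hy; simp [hf y hy]

end Defs

/-!
The dual of `X ⊕₁ Y` is isometrically `X* ⊕∞ Y*`, via `φ ↦ (φ ∘ inl, φ ∘ inr)`. Since
`‖(x, y)‖ = ‖x‖ + ‖y‖`, a functional of norm at most one that almost norms `(x, y)` must almost
norm `x` and `y` separately, so the slice `S((x, y), α)` lies in `S(x, α) × S(y, α)` and its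
diameter is at most the larger of the two factor diameters. Conversely, fixing a second
coordinate `g` in the slice `S(y, α/2)`, the isometric embedding `f ↦ (f, g)` carries `S(x, α/2)`
into `S((x, y), α)`, so small slices of the sum yield small slices of each factor.
-/

open WithLp

namespace WithLp

variable (p : ℝ≥0∞) (𝕜 X Y : Type*) [NontriviallyNormedField 𝕜]
  [NormedAddCommGroup X] [NormedSpace 𝕜 X] [NormedAddCommGroup Y] [NormedSpace 𝕜 Y]

noncomputable def inlL : X →L[𝕜] WithLp p (X × Y) :=
  (prodContinuousLinearEquiv p 𝕜 X Y).symm.toContinuousLinearMap.comp (.inl 𝕜 X Y)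

noncomputable def inrL : Y →L[𝕜] WithLp p (X × Y) :=
  (prodContinuousLinearEquiv p 𝕜 X Y).symm.toContinuousLinearMap.comp (.inr 𝕜 X Y)

variable {p 𝕜 X Y}

@[simp] lemma inlL_apply (x : X) : inlL p 𝕜 X Y x = toLp p (x, 0) := rfl

@[simp] lemma inrL_apply (y : Y) : inrL p 𝕜 X Y y = toLp p (0, y) := rfl

lemma inlL_fst_add_inrL_snd (w : WithLp p (X × Y)) :
    inlL p 𝕜 X Y w.fst + inrL p 𝕜 X Y w.snd = w := by
  rw [inlL_apply, inrL_apply, ← toLp_add, Prod.mk_add_mk, add_zero, zero_add]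
  rfl

variable {F : Type*} [NormedAddCommGroup F] [NormedSpace 𝕜 F]

lemma comp_inlL_add_comp_inrL_apply (φ : WithLp p (X × Y) →L[𝕜] F) (w : WithLp p (X × Y)) :
    φ.comp (inlL p 𝕜 X Y) w.fst + φ.comp (inrL p 𝕜 X Y) w.snd = φ w := by
  rw [ContinuousLinearMap.comp_apply, ContinuousLinearMap.comp_apply, ← map_add,
    inlL_fst_add_inrL_snd]

theorem L1.opNorm_eq_max (φ : WithLp 1 (X × Y) →L[𝕜] F) :
    ‖φ‖ = max ‖φ.comp (inlL 1 𝕜 X Y)‖ ‖φ.comp (inrL 1 𝕜 X Y)‖ := by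
  apply le_antisymm
  · refine φ.opNorm_le_bound (by positivity) fun w => ?_
    set M := max ‖φ.comp (inlL 1 𝕜 X Y)‖ ‖φ.comp (inrL 1 𝕜 X Y)‖
    calc ‖φ w‖ = ‖φ.comp (inlL 1 𝕜 X Y) w.fst + φ.comp (inrL 1 𝕜 X Y) w.snd‖ := by
          rw [comp_inlL_add_comp_inrL_apply]
      _ ≤ M * ‖w.fst‖ + M * ‖w.snd‖ :=
          norm_add_le_of_le
            ((ContinuousLinearMap.le_opNorm _ _).trans (by gcongr; exact le_max_left _ _))
            ((ContinuousLinearMap.le_opNorm _ _).trans (by gcongr; exact le_max_right _ _))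
      _ = M * ‖w‖ := by rw [prod_norm_eq_of_L1, mul_add]
  · refine max_le ?_ ?_ <;>
    refine ContinuousLinearMap.opNorm_le_bound _ (norm_nonneg _) fun v => ?_
    · simpa using φ.le_opNorm (inlL 1 𝕜 X Y v)
    · simpa using φ.le_opNorm (inrL 1 𝕜 X Y v)

theorem L1.opNorm_comp_fstL_add_comp_sndL (f : X →L[𝕜] F) (g : Y →L[𝕜] F) :
    ‖f.comp (fstL 1 𝕜 X Y) + g.comp (sndL 1 𝕜 X Y)‖ = max ‖f‖ ‖g‖ := by
  rw [L1.opNorm_eq_max]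
  congr 2 <;> ext <;> simp

theorem L1.opNorm_comp_fstL (f : X →L[𝕜] F) : ‖f.comp (fstL 1 𝕜 X Y)‖ = ‖f‖ := by
  simpa using L1.opNorm_comp_fstL_add_comp_sndL f (0 : Y →L[𝕜] F)

theorem L1.opNorm_comp_sndL (g : Y →L[𝕜] F) : ‖g.comp (sndL 1 𝕜 X Y)‖ = ‖g‖ := by
  simpa using L1.opNorm_comp_fstL_add_comp_sndL (0 : X →L[𝕜] F) g

end WithLp

section WStarSlice

variable {Z : Type*} [NormedAddCommGroup Z] [NormedSpace ℝ Z]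

theorem apply_le_norm_of_norm_le_one {f : StrongDual ℝ Z} (hf : ‖f‖ ≤ 1) (z : Z) : f z ≤ ‖z‖ :=
  calc f z ≤ ‖f‖ * ‖z‖ := (le_abs_self _).trans (f.le_opNorm z)
    _ ≤ 1 * ‖z‖ := by gcongr
    _ = ‖z‖ := one_mul _

theorem sSup_image_apply_closedBall_dual (z : Z) :
    sSup ((fun g : StrongDual ℝ Z => g z) '' closedBall 0 1) = ‖z‖ := by
  refine IsGreatest.csSup_eq ⟨?_, ?_⟩
  · obtain ⟨g, hg, hgz⟩ := exists_dual_vector'' ℝ z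
    exact ⟨g, mem_closedBall_zero_iff.2 hg, hgz⟩
  · rintro _ ⟨f, hf, rfl⟩
    exact apply_le_norm_of_norm_le_one (mem_closedBall_zero_iff.1 hf) z

theorem mem_wStarSlice_iff {z : Z} {α : ℝ} {f : StrongDual ℝ Z} :
    f ∈ wStarSlice Z z α ↔ ‖f‖ ≤ 1 ∧ ‖z‖ - α < f z := by
  rw [wStarSlice, Set.mem_ofPred_eq, mem_closedBall_zero_iff, sSup_image_apply_closedBall_dual]

theorem wStarSlice_mono (z : Z) {α β : ℝ} (h : α ≤ β) : wStarSlice Z z α ⊆ wStarSlice Z z β :=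
  fun _ hf => by
    rw [mem_wStarSlice_iff] at hf ⊢
    exact ⟨hf.1, by linarith [hf.2]⟩

theorem isBounded_wStarSlice (z : Z) (α : ℝ) : Bornology.IsBounded (wStarSlice Z z α) :=
  isBounded_closedBall.subset fun _ hf => hf.1

theorem wStarSlice_nonempty (z : Z) {α : ℝ} (hα : 0 < α) : (wStarSlice Z z α).Nonempty := by
  obtain ⟨g, hg, hgz⟩ := exists_dual_vector'' ℝ z
  exact ⟨g, mem_wStarSlice_iff.2 ⟨hg, by simpa [hgz] using hα⟩⟩

theorem nonRough_iff_wStarBDP : NonRough Z ↔ WStarBDP Z := by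
  simp only [NonRough, EpsRough, WStarBDP, not_forall, not_le, exists_prop]

end WStarSlice

section L1Sum

variable {X Y : Type*} [NormedAddCommGroup X] [NormedSpace ℝ X]
  [NormedAddCommGroup Y] [NormedSpace ℝ Y]

theorem comp_fstL_add_comp_sndL_mem_wStarSlice {z : WithLp 1 (X × Y)} {α β : ℝ}
    {f : StrongDual ℝ X} {g : StrongDual ℝ Y}
    (hf : f ∈ wStarSlice X z.fst α) (hg : g ∈ wStarSlice Y z.snd β) :
    f.comp (fstL 1 ℝ X Y) + g.comp (sndL 1 ℝ X Y) ∈ wStarSlice (WithLp 1 (X × Y)) z (α + β) := by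
  rw [mem_wStarSlice_iff] at hf hg ⊢
  refine ⟨?_, ?_⟩
  · rw [L1.opNorm_comp_fstL_add_comp_sndL]
    exact max_le hf.1 hg.1
  · simp only [add_apply, ContinuousLinearMap.comp_apply, fstL_apply, sndL_apply,
      prod_norm_eq_of_L1]
    linarith [hf.2, hg.2]

theorem comp_inlL_mem_wStarSlice {z : WithLp 1 (X × Y)} {α : ℝ}
    {φ : StrongDual ℝ (WithLp 1 (X × Y))} (hφ : φ ∈ wStarSlice _ z α) :
    φ.comp (inlL 1 ℝ X Y) ∈ wStarSlice X z.fst α := by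
  rw [mem_wStarSlice_iff, L1.opNorm_eq_max, max_le_iff, ← comp_inlL_add_comp_inrL_apply,
    prod_norm_eq_of_L1] at hφ
  rw [mem_wStarSlice_iff]
  exact ⟨hφ.1.1, by linarith [hφ.2, apply_le_norm_of_norm_le_one hφ.1.2 z.snd]⟩

theorem comp_inrL_mem_wStarSlice {z : WithLp 1 (X × Y)} {α : ℝ}
    {φ : StrongDual ℝ (WithLp 1 (X × Y))} (hφ : φ ∈ wStarSlice _ z α) :
    φ.comp (inrL 1 ℝ X Y) ∈ wStarSlice Y z.snd α := by
  rw [mem_wStarSlice_iff, L1.opNorm_eq_max, max_le_iff, ← comp_inlL_add_comp_inrL_apply,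
    prod_norm_eq_of_L1] at hφ
  rw [mem_wStarSlice_iff]
  exact ⟨hφ.1.2, by linarith [hφ.2, apply_le_norm_of_norm_le_one hφ.1.1 z.fst]⟩

theorem diam_wStarSlice_le_max (z : WithLp 1 (X × Y)) (α : ℝ) :
    diam (wStarSlice (WithLp 1 (X × Y)) z α) ≤
      max (diam (wStarSlice X z.fst α)) (diam (wStarSlice Y z.snd α)) := by
  refine diam_le_of_forall_dist_le (le_max_of_le_left diam_nonneg) fun φ₁ h₁ φ₂ h₂ => ?_
  rw [dist_eq_norm, L1.opNorm_eq_max, ContinuousLinearMap.sub_comp,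
    ContinuousLinearMap.sub_comp, ← dist_eq_norm, ← dist_eq_norm]
  exact max_le_max
    (dist_le_diam_of_mem (isBounded_wStarSlice _ _) (comp_inlL_mem_wStarSlice h₁)
      (comp_inlL_mem_wStarSlice h₂))
    (dist_le_diam_of_mem (isBounded_wStarSlice _ _) (comp_inrL_mem_wStarSlice h₁)
      (comp_inrL_mem_wStarSlice h₂))

theorem diam_wStarSlice_fst_le (z : WithLp 1 (X × Y)) {α : ℝ} (hα : 0 < α) :
    diam (wStarSlice X z.fst (α / 2)) ≤ diam (wStarSlice (WithLp 1 (X × Y)) z α) := by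
  obtain ⟨g, hg⟩ := wStarSlice_nonempty z.snd (half_pos hα)
  have hΦ : Isometry fun f : StrongDual ℝ X => f.comp (fstL 1 ℝ X Y) + g.comp (sndL 1 ℝ X Y) :=
    Isometry.of_dist_eq fun f₁ f₂ => by
      rw [dist_eq_norm, dist_eq_norm, add_sub_add_right_eq_sub, ← ContinuousLinearMap.sub_comp,
        L1.opNorm_comp_fstL]
  rw [← hΦ.diam_image]
  refine diam_mono (Set.image_subset_iff.2 fun f hf => ?_) (isBounded_wStarSlice z α)
  simpa using comp_fstL_add_comp_sndL_mem_wStarSlice hf hg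

theorem diam_wStarSlice_snd_le (z : WithLp 1 (X × Y)) {α : ℝ} (hα : 0 < α) :
    diam (wStarSlice Y z.snd (α / 2)) ≤ diam (wStarSlice (WithLp 1 (X × Y)) z α) := by
  obtain ⟨f, hf⟩ := wStarSlice_nonempty z.fst (half_pos hα)
  have hΦ : Isometry fun g : StrongDual ℝ Y => f.comp (fstL 1 ℝ X Y) + g.comp (sndL 1 ℝ X Y) :=
    Isometry.of_dist_eq fun g₁ g₂ => by
      rw [dist_eq_norm, dist_eq_norm, add_sub_add_left_eq_sub, ← ContinuousLinearMap.sub_comp,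
        L1.opNorm_comp_sndL]
  rw [← hΦ.diam_image]
  refine diam_mono (Set.image_subset_iff.2 fun g hg => ?_) (isBounded_wStarSlice z α)
  simpa using comp_fstL_add_comp_sndL_mem_wStarSlice hf hg

end L1Sum

theorem statement_6_general (X Y : Type*) [NormedAddCommGroup X] [NormedSpace ℝ X]
    [NormedAddCommGroup Y] [NormedSpace ℝ Y] :
    NonRough (WithLp 1 (X × Y)) ↔ (NonRough X ∧ NonRough Y) := by
  simp only [nonRough_iff_wStarBDP]
  refine ⟨fun h => ⟨fun ε hε => ?_, fun ε hε => ?_⟩, fun ⟨hX, hY⟩ ε hε => ?_⟩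
  · obtain ⟨z, α, hα, hz⟩ := h ε hε
    exact ⟨z.fst, α / 2, half_pos hα, (diam_wStarSlice_fst_le z hα).trans_lt hz⟩
  · obtain ⟨z, α, hα, hz⟩ := h ε hε
    exact ⟨z.snd, α / 2, half_pos hα, (diam_wStarSlice_snd_le z hα).trans_lt hz⟩
  · obtain ⟨x, α, hα, hx⟩ := hX ε hε
    obtain ⟨y, β, hβ, hy⟩ := hY ε hε
    refine ⟨toLp 1 (x, y), min α β, lt_min hα hβ, ?_⟩
    calc diam (wStarSlice (WithLp 1 (X × Y)) (toLp 1 (x, y)) (min α β))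
        ≤ max (diam (wStarSlice X x (min α β))) (diam (wStarSlice Y y (min α β))) :=
          diam_wStarSlice_le_max _ _
      _ ≤ max (diam (wStarSlice X x α)) (diam (wStarSlice Y y β)) :=
          max_le_max
            (diam_mono (wStarSlice_mono x (min_le_left α β)) (isBounded_wStarSlice x α))
            (diam_mono (wStarSlice_mono y (min_le_right α β)) (isBounded_wStarSlice y β))
      _ < ε := max_lt hx hy

/-- The norm of `X ⊕₁ Y` is non rough iff both the norms of `X` and `Y` are
non rough. -/
theorem statement_6 (X Y : Type*) [NormedAddCommGroup X] [NormedSpace ℝ X] [CompleteSpace X]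
    [NormedAddCommGroup Y] [NormedSpace ℝ Y] [CompleteSpace Y] :
    NonRough (WithLp 1 (X × Y)) ↔ (NonRough X ∧ NonRough Y) :=
  statement_6_general X Y
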